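/- arXiv:1809.10200 — 2 statements merged into one kernel-verified Lean document; each statement's English description precedes it below -/
import Mathlib

section
/- Let f ∈ L²(ℝ², ℂ), let g : ℝ² → ℂ be measurable with |g(ω)| ≤ 1 for all ω, let ω₀, a ∈ ℝ², η₀ > 0 and ε ≥ 0, and assume |g(ω)| ≤ ε whenever ‖ω − ω₀‖ > η₀. Then ∫_{ℝ²} |(e^{−i⟨ω,a⟩} − e^{−i⟨ω₀,a⟩}) · g(ω) · f(ω)|² dω ≤ (4ε² + η₀²‖a‖²) · ‖f‖₂². -/
open MeasureTheory Complex
open scoped RealInnerProductSpace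

local notation "ℝ²" => EuclideanSpace ℝ (Fin 2)

/-! The phase difference `e^{-i⟨ω,a⟩} - e^{-i⟨ω₀,a⟩}` is at most `2` in modulus everywhere and at
most `η₀‖a‖` on the disc `‖ω - ω₀‖ ≤ η₀`, while `|g| ≤ 1` inside and `|g| ≤ ε` outside that disc.
So the multiplier `(e^{-i⟨ω,a⟩} - e^{-i⟨ω₀,a⟩}) g(ω)` has squared modulus at most `4ε² + η₀²‖a‖²`
everywhere, and integrating against `|f|²` gives the bound. -/

lemma norm_exp_neg_I_mul_ofReal (x : ℝ) : ‖exp (-(I * x))‖ = 1 := by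
  simpa using norm_exp_I_mul_ofReal (-x)

lemma norm_exp_neg_I_mul_sub_exp_neg_I_mul_le (x y : ℝ) :
    ‖exp (-(I * x)) - exp (-(I * y))‖ ≤ |x - y| := by
  have h : exp (-(I * x)) - exp (-(I * y)) = exp (-(I * y)) * (exp (I * ↑(y - x)) - 1) := by
    rw [mul_sub, mul_one, ← exp_add]
    push_cast
    ring_nf
  rw [h, norm_mul, norm_exp_neg_I_mul_ofReal, one_mul, abs_sub_comm]
  exact Real.norm_exp_I_mul_ofReal_sub_one_le

lemma norm_exp_neg_I_mul_sub_exp_neg_I_mul_le_two (x y : ℝ) :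
    ‖exp (-(I * x)) - exp (-(I * y))‖ ≤ 2 := by
  calc _ ≤ ‖exp (-(I * x))‖ + ‖exp (-(I * y))‖ := norm_sub_le _ _
    _ = 2 := by rw [norm_exp_neg_I_mul_ofReal, norm_exp_neg_I_mul_ofReal]; norm_num

section InnerProductSpace

variable {E : Type*} [NormedAddCommGroup E] [InnerProductSpace ℝ E]

lemma norm_exp_neg_I_mul_inner_sub_le (ω ω₀ a : E) :
    ‖exp (-(I * ⟪ω, a⟫)) - exp (-(I * ⟪ω₀, a⟫))‖ ≤ ‖ω - ω₀‖ * ‖a‖ := by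
  calc _ ≤ |⟪ω, a⟫ - ⟪ω₀, a⟫| := norm_exp_neg_I_mul_sub_exp_neg_I_mul_le _ _
    _ = |⟪ω - ω₀, a⟫| := by rw [inner_sub_left]
    _ ≤ ‖ω - ω₀‖ * ‖a‖ := abs_real_inner_le_norm _ _

lemma sq_norm_exp_neg_I_mul_inner_sub_mul_le {ω ω₀ a : E} {η₀ ε : ℝ} {z : ℂ} (hz : ‖z‖ ≤ 1)
    (htail : η₀ < ‖ω - ω₀‖ → ‖z‖ ≤ ε) :
    ‖(exp (-(I * ⟪ω, a⟫)) - exp (-(I * ⟪ω₀, a⟫))) * z‖ ^ 2 ≤ 4 * ε ^ 2 + η₀ ^ 2 * ‖a‖ ^ 2 := by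
  rw [norm_mul]
  rcases le_or_gt ‖ω - ω₀‖ η₀ with hnear | hfar
  · have hle : ‖exp (-(I * ⟪ω, a⟫)) - exp (-(I * ⟪ω₀, a⟫))‖ * ‖z‖ ≤ η₀ * ‖a‖ :=
      calc _ ≤ (‖ω - ω₀‖ * ‖a‖) * 1 :=
            mul_le_mul (norm_exp_neg_I_mul_inner_sub_le ω ω₀ a) hz (norm_nonneg _) (by positivity)
        _ ≤ η₀ * ‖a‖ := by rw [mul_one]; gcongr
    nlinarith [pow_le_pow_left₀ (by positivity) hle 2, sq_nonneg ε]
  · have hle : ‖exp (-(I * ⟪ω, a⟫)) - exp (-(I * ⟪ω₀, a⟫))‖ * ‖z‖ ≤ 2 * ε :=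
      mul_le_mul (norm_exp_neg_I_mul_sub_exp_neg_I_mul_le_two _ _) (htail hfar) (norm_nonneg _)
        zero_le_two
    nlinarith [pow_le_pow_left₀ (by positivity) hle 2, sq_nonneg (η₀ * ‖a‖)]

end InnerProductSpace

lemma integral_sq_norm_mul_le {α 𝕜 : Type*} [MeasurableSpace α] {μ : Measure α}
    [NormedDivisionRing 𝕜] {h f : α → 𝕜} {C : ℝ} (hf : MemLp f 2 μ) (hh : ∀ x, ‖h x‖ ^ 2 ≤ C) :
    ∫ x, ‖h x * f x‖ ^ 2 ∂μ ≤ C * ∫ x, ‖f x‖ ^ 2 ∂μ := by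
  rw [← integral_const_mul]
  refine integral_mono_of_nonneg (.of_forall fun x ↦ by positivity)
    (hf.integrable_norm_pow two_ne_zero |>.const_mul C) (.of_forall fun x ↦ ?_)
  simp only [norm_mul, mul_pow]
  exact mul_le_mul_of_nonneg_right (hh x) (by positivity)

theorem stmt0_general (f g : ℝ² → ℂ) (hf : MemLp f 2 (volume : Measure ℝ²))
    (hg1 : ∀ ω, ‖g ω‖ ≤ 1)
    (ω₀ a : ℝ²) (η₀ ε : ℝ)
    (htail : ∀ ω : ℝ², η₀ < ‖ω - ω₀‖ → ‖g ω‖ ≤ ε) :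
    ∫ ω : ℝ², ‖(Complex.exp (-(Complex.I * (⟪ω, a⟫ : ℝ))) -
        Complex.exp (-(Complex.I * (⟪ω₀, a⟫ : ℝ)))) * g ω * f ω‖ ^ 2
      ≤ (4 * ε ^ 2 + η₀ ^ 2 * ‖a‖ ^ 2) * ∫ ω : ℝ², ‖f ω‖ ^ 2 :=
  integral_sq_norm_mul_le hf fun ω ↦ sq_norm_exp_neg_I_mul_inner_sub_mul_le (hg1 ω) (htail ω)

/-- Fourier-side inequality at the core of Proposition 1: for `f ∈ L²(ℝ², ℂ)`,
`g` measurable with `|g| ≤ 1` everywhere and `|g(ω)| ≤ ε` for `‖ω - ω₀‖ > η₀`, one has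
`∫ |(e^{-i⟨ω,a⟩} - e^{-i⟨ω₀,a⟩}) g(ω) f(ω)|² dω ≤ (4ε² + η₀²‖a‖²) ‖f‖₂²`. -/
theorem stmt0 (f g : ℝ² → ℂ) (hf : MemLp f 2 (volume : Measure ℝ²))
    (hg : Measurable g) (hg1 : ∀ ω, ‖g ω‖ ≤ 1)
    (ω₀ a : ℝ²) (η₀ ε : ℝ) (hη₀ : 0 < η₀) (hε : 0 ≤ ε)
    (htail : ∀ ω : ℝ², η₀ < ‖ω - ω₀‖ → ‖g ω‖ ≤ ε) :
    ∫ ω : ℝ², ‖(Complex.exp (-(Complex.I * (⟪ω, a⟫ : ℝ))) -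
        Complex.exp (-(Complex.I * (⟪ω₀, a⟫ : ℝ)))) * g ω * f ω‖ ^ 2
      ≤ (4 * ε ^ 2 + η₀ ^ 2 * ‖a‖ ^ 2) * ∫ ω : ℝ², ‖f ω‖ ^ 2 :=
  stmt0_general f g hf hg1 ω₀ a η₀ ε htail
end

section
/- Let Σ be a real symmetric positive semidefinite 2×2 matrix, Γ an invertible real 2×2 matrix and b ∈ ℝ². Set M := Σ + ΓᵀΓ, b̃ := M⁻¹Γᵀb and c₀ := ‖b‖² − b̃ᵀM b̃ ≥ 0. Define Δ as the inverse Fourier transform of ω ↦ exp(−ωᵀΣω − ‖Γω − b‖²) and h as the inverse Fourier transform of ω ↦ exp(−ωᵀΣω − ‖Γω‖²) (both functions are integrable since M is positive definite). Then h(u) > 0 for every u ∈ ℝ², and |Δ(u)| = e^{−c₀} · h(u) for every u ∈ ℝ². -/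
/-!
Completing the square, `ωᵀSω + ‖Γω - b‖² = (ω - b̃)ᵀM(ω - b̃) + c₀`, writes the integrand of `Δ`
as `e^{-c₀}` times the integrand of `h` translated by `b̃`. A translation multiplies an inverse
Fourier transform by the unimodular factor `e^{i⟨u,b̃⟩}`, so `|Δ| = e^{-c₀} |h|`. Finally `h` is
the Fourier transform of a nondegenerate Gaussian, which the substitution `v = M^{1/2} ω`
reduces to the standard one: a positive real number.
-/

open Matrix MeasureTheory Complex
open scoped Real

/-- Inverse Fourier transform on ℝ² with the convention
`g^∨(u) = (2π)^{-2} ∫ g(ω) e^{i⟨u,ω⟩} dω`, where `⟨u,ω⟩ = u ⬝ᵥ ω` is the Euclidean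
inner product. -/
noncomputable def invFourier (g : (Fin 2 → ℝ) → ℂ) (u : Fin 2 → ℝ) : ℂ :=
  (((2 * π) ^ 2 : ℝ)⁻¹ : ℂ) * ∫ ω : Fin 2 → ℝ, g ω * Complex.exp (Complex.I * ((u ⬝ᵥ ω : ℝ) : ℂ))

namespace Matrix

variable {ι κ : Type*} [Fintype ι] [Fintype κ]

theorem integral_comp_mulVec [DecidableEq ι] {E : Type*} [NormedAddCommGroup E] [NormedSpace ℝ E]
    {A : Matrix ι ι ℝ} (hA : A.det ≠ 0) (g : (ι → ℝ) → E) :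
    ∫ ω, g (A *ᵥ ω) = |A.det|⁻¹ • ∫ v, g v := by
  have hA' : LinearMap.det (toLin' A) ≠ 0 := by rwa [LinearMap.det_toLin']
  have hemb : MeasurableEmbedding (toLin' A) :=
    ((toLin' A).equivOfDetNeZero hA').toContinuousLinearEquiv.toHomeomorph.measurableEmbedding
  rw [← abs_inv, ← ENNReal.toReal_ofReal (abs_nonneg A.det⁻¹), ← integral_smul_measure,
    ← Real.map_matrix_volume_pi_eq_smul_volume_pi hA, hemb.integral_map]
  rfl

theorem integral_cexp_neg_dotProduct_self_add (w : ι → ℝ) :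
    ∫ v : ι → ℝ, cexp (-((v ⬝ᵥ v : ℝ) : ℂ) + I * ((w ⬝ᵥ v : ℝ) : ℂ))
      = ((π ^ (Fintype.card ι / 2 : ℝ) * Real.exp (-(w ⬝ᵥ w) / 4) : ℝ) : ℂ) := by
  convert GaussianFourier.integral_cexp_neg_mul_sum_add (b := 1) (by simp) (fun i ↦ I * w i)
    using 3 with v
  · push_cast [dotProduct]
    simp [Finset.mul_sum, mul_assoc, sq]
  · push_cast
    rw [ofReal_cpow Real.pi_pos.le]
    simp only [dotProduct, mul_pow, I_sq]
    push_cast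
    simp [Finset.sum_neg_distrib, neg_div, sq]

open scoped MatrixOrder in
theorem PosDef.integral_cexp_neg_dotProduct_mulVec_add [DecidableEq ι] {M : Matrix ι ι ℝ}
    (hM : M.PosDef) (u : ι → ℝ) :
    ∫ ω : ι → ℝ, cexp (-((ω ⬝ᵥ (M *ᵥ ω) : ℝ) : ℂ) + I * ((u ⬝ᵥ ω : ℝ) : ℂ))
      = ((π ^ (Fintype.card ι / 2 : ℝ) / √M.det * Real.exp (-(u ⬝ᵥ (M⁻¹ *ᵥ u)) / 4) : ℝ) : ℂ) := by
  set A := CFC.sqrt M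
  have hA_mul : A * A = M := CFC.sqrt_mul_sqrt_self M hM.posSemidef.nonneg
  have hA_symm : Aᵀ = A := by
    rw [← conjTranspose_eq_transpose_of_trivial]
    exact (CFC.sqrt_nonneg M).posSemidef.isHermitian.eq
  have hA_det : A.det = √M.det := by simpa using hM.posSemidef.det_sqrt
  have hA_det_pos : 0 < A.det := hA_det ▸ Real.sqrt_pos.2 hM.det_pos
  have hA_unit : IsUnit A.det := hA_det_pos.ne'.isUnit
  set w := A⁻¹ *ᵥ u
  have hquad (ω : ι → ℝ) : ω ⬝ᵥ (M *ᵥ ω) = (A *ᵥ ω) ⬝ᵥ (A *ᵥ ω) := by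
    rw [← hA_mul, ← mulVec_mulVec, dotProduct_mulVec, ← mulVec_transpose, hA_symm]
  have hlin (ω : ι → ℝ) : u ⬝ᵥ ω = w ⬝ᵥ (A *ᵥ ω) := by
    rw [dotProduct_mulVec, ← mulVec_transpose, hA_symm, mulVec_mulVec, mul_nonsing_inv _ hA_unit,
      one_mulVec]
  have hw : w ⬝ᵥ w = u ⬝ᵥ (M⁻¹ *ᵥ u) := by
    rw [dotProduct_mulVec, ← mulVec_transpose, transpose_nonsing_inv, hA_symm, mulVec_mulVec,
      ← hA_mul, mul_inv_rev, dotProduct_comm]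
  let g (v : ι → ℝ) : ℂ := cexp (-((v ⬝ᵥ v : ℝ) : ℂ) + I * ((w ⬝ᵥ v : ℝ) : ℂ))
  calc _ = ∫ ω, g (A *ᵥ ω) := by simp_rw [g, hquad, hlin]
    _ = _ := by
      rw [integral_comp_mulVec hA_det_pos.ne' g, integral_cexp_neg_dotProduct_self_add, hw,
        abs_of_pos hA_det_pos, hA_det, real_smul]
      push_cast
      ring

theorem PosSemidef.posDef_add_transpose_mul_self {S : Matrix ι ι ℝ} (hS : S.PosSemidef)
    {Γ : Matrix κ ι ℝ} (hΓ : Function.Injective Γ.mulVec) : (S + Γᵀ * Γ).PosDef :=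
  PosDef.posSemidef_add hS (conjTranspose_eq_transpose_of_trivial Γ ▸
    PosDef.conjTranspose_mul_self Γ hΓ)

theorem dotProduct_add_transpose_mul_self_mulVec (S : Matrix ι ι ℝ)
    (Γ : Matrix κ ι ℝ) (ω : ι → ℝ) :
    ω ⬝ᵥ ((S + Γᵀ * Γ) *ᵥ ω) = ω ⬝ᵥ (S *ᵥ ω) + (Γ *ᵥ ω) ⬝ᵥ (Γ *ᵥ ω) := by
  rw [add_mulVec, dotProduct_add, ← mulVec_mulVec, dotProduct_mulVec ω Γᵀ, vecMul_transpose]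

theorem dotProduct_mulVec_add_dotProduct_sub_eq {S : Matrix ι ι ℝ}
    (hS : S.IsSymm) (Γ : Matrix κ ι ℝ) (b : κ → ℝ) {x : ι → ℝ}
    (hx : (S + Γᵀ * Γ) *ᵥ x = Γᵀ *ᵥ b) (ω : ι → ℝ) :
    ω ⬝ᵥ (S *ᵥ ω) + (Γ *ᵥ ω - b) ⬝ᵥ (Γ *ᵥ ω - b)
      = (ω - x) ⬝ᵥ ((S + Γᵀ * Γ) *ᵥ (ω - x)) + (b ⬝ᵥ b - x ⬝ᵥ ((S + Γᵀ * Γ) *ᵥ x)) := by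
  set M := S + Γᵀ * Γ
  have hM : Mᵀ = M := by rw [transpose_add, transpose_mul, transpose_transpose, hS.eq]
  have hcross : ω ⬝ᵥ (M *ᵥ x) = (Γ *ᵥ ω) ⬝ᵥ b := by
    rw [hx, dotProduct_mulVec, vecMul_transpose]
  have hcross' : x ⬝ᵥ (M *ᵥ ω) = ω ⬝ᵥ (M *ᵥ x) := by
    rw [dotProduct_mulVec, ← mulVec_transpose, hM, dotProduct_comm]
  have hquad : ω ⬝ᵥ (M *ᵥ ω) = ω ⬝ᵥ (S *ᵥ ω) + (Γ *ᵥ ω) ⬝ᵥ (Γ *ᵥ ω) :=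
    dotProduct_add_transpose_mul_self_mulVec S Γ ω
  simp only [mulVec_sub, sub_dotProduct, dotProduct_sub]
  rw [hcross', hcross, hquad, dotProduct_comm b]
  ring

theorem PosSemidef.dotProduct_mulVec_le_dotProduct_self {S : Matrix ι ι ℝ} (hS : S.PosSemidef)
    (Γ : Matrix κ ι ℝ) (b : κ → ℝ) {x : ι → ℝ} (hx : (S + Γᵀ * Γ) *ᵥ x = Γᵀ *ᵥ b) :
    x ⬝ᵥ ((S + Γᵀ * Γ) *ᵥ x) ≤ b ⬝ᵥ b := by
  have hsq := dotProduct_mulVec_add_dotProduct_sub_eq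
    (isHermitian_iff_isSymm.1 hS.isHermitian) Γ b hx x
  rw [sub_self, zero_dotProduct, zero_add] at hsq
  have hSx : 0 ≤ x ⬝ᵥ (S *ᵥ x) := by simpa using hS.dotProduct_mulVec_nonneg x
  have hres : 0 ≤ (Γ *ᵥ x - b) ⬝ᵥ (Γ *ᵥ x - b) := by
    simpa using dotProduct_self_star_nonneg (Γ *ᵥ x - b)
  linarith

end Matrix

theorem invFourier_const_mul (c : ℂ) (g : (Fin 2 → ℝ) → ℂ) (u : Fin 2 → ℝ) :
    invFourier (fun ω ↦ c * g ω) u = c * invFourier g u := by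
  simp only [invFourier, mul_assoc, integral_const_mul]
  ring

theorem invFourier_comp_sub (g : (Fin 2 → ℝ) → ℂ) (a u : Fin 2 → ℝ) :
    invFourier (fun ω ↦ g (ω - a)) u = cexp (I * ((u ⬝ᵥ a : ℝ) : ℂ)) * invFourier g u := by
  have hshift (ω : Fin 2 → ℝ) : cexp (I * ((u ⬝ᵥ ω : ℝ) : ℂ))
      = cexp (I * ((u ⬝ᵥ a : ℝ) : ℂ)) * cexp (I * ((u ⬝ᵥ (ω - a) : ℝ) : ℂ)) := by
    rw [← exp_add, dotProduct_sub]
    push_cast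
    ring_nf
  simp only [invFourier]
  rw [mul_left_comm (cexp _)]
  congr 1
  rw [← integral_const_mul, ← integral_sub_right_eq_self
    (fun ω ↦ cexp (I * ((u ⬝ᵥ a : ℝ) : ℂ)) * (g ω * cexp (I * ((u ⬝ᵥ ω : ℝ) : ℂ)))) a]
  congr 1
  ext ω
  rw [hshift ω]
  ring

theorem invFourier_cexp_neg_dotProduct_mulVec {M : Matrix (Fin 2) (Fin 2) ℝ} (hM : M.PosDef)
    (u : Fin 2 → ℝ) :
    invFourier (fun ω ↦ cexp (-((ω ⬝ᵥ (M *ᵥ ω) : ℝ) : ℂ))) u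
      = ((((2 * π) ^ 2)⁻¹ * (π / √M.det * Real.exp (-(u ⬝ᵥ (M⁻¹ *ᵥ u)) / 4)) : ℝ) : ℂ) := by
  simp only [invFourier, ← exp_add, hM.integral_cexp_neg_dotProduct_mulVec_add, Fintype.card_fin]
  norm_num

/-- For `S` symmetric positive semidefinite, `Γ` invertible and `b ∈ ℝ²`,
set `M := S + ΓᵀΓ`, `b̃ := M⁻¹Γᵀb`, `c₀ := ‖b‖² - b̃ᵀMb̃`. Let `Δ` be the inverse Fourier
transform of `ω ↦ exp(-ωᵀSω - ‖Γω - b‖²)` and `h` that of `ω ↦ exp(-ωᵀSω - ‖Γω‖²)`.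
Then `c₀ ≥ 0`, `h(u) > 0` for every `u`, and `|Δ(u)| = e^{-c₀} h(u)` for every `u`. -/
theorem stmt11 (S Γ : Matrix (Fin 2) (Fin 2) ℝ)
    (hS : S.IsSymm) (hS' : S.PosSemidef) (hΓ : IsUnit Γ) (b : Fin 2 → ℝ)
    (M : Matrix (Fin 2) (Fin 2) ℝ) (hM : M = S + Γᵀ * Γ)
    (btil : Fin 2 → ℝ) (hbtil : btil = M⁻¹ *ᵥ (Γᵀ *ᵥ b))
    (c₀ : ℝ) (hc₀ : c₀ = b ⬝ᵥ b - btil ⬝ᵥ (M *ᵥ btil))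
    (Δ h : (Fin 2 → ℝ) → ℂ)
    (hΔ : Δ = invFourier (fun ω =>
      Complex.exp (-(((ω ⬝ᵥ (S *ᵥ ω) + (Γ *ᵥ ω - b) ⬝ᵥ (Γ *ᵥ ω - b) : ℝ)) : ℂ))))
    (hh : h = invFourier (fun ω =>
      Complex.exp (-(((ω ⬝ᵥ (S *ᵥ ω) + (Γ *ᵥ ω) ⬝ᵥ (Γ *ᵥ ω) : ℝ)) : ℂ)))) :
    0 ≤ c₀ ∧
    (∀ u : Fin 2 → ℝ, 0 < (h u).re ∧ (h u).im = 0) ∧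
    (∀ u : Fin 2 → ℝ, ‖Δ u‖ = Real.exp (-c₀) * (h u).re) := by
  have hMpos : M.PosDef :=
    hM ▸ hS'.posDef_add_transpose_mul_self (mulVec_injective_iff_isUnit.2 hΓ)
  have hMbtil : M *ᵥ btil = Γᵀ *ᵥ b := by
    rw [hbtil, mulVec_mulVec, mul_nonsing_inv _ hMpos.det_pos.ne'.isUnit, one_mulVec]
  have hsq (ω : Fin 2 → ℝ) : ω ⬝ᵥ (S *ᵥ ω) + (Γ *ᵥ ω - b) ⬝ᵥ (Γ *ᵥ ω - b)
      = (ω - btil) ⬝ᵥ (M *ᵥ (ω - btil)) + c₀ := by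
    subst hM hc₀
    exact dotProduct_mulVec_add_dotProduct_sub_eq hS Γ b hMbtil ω
  have hc₀_nonneg : 0 ≤ c₀ := by
    subst hM hc₀
    exact sub_nonneg.2 (hS'.dotProduct_mulVec_le_dotProduct_self Γ b hMbtil)
  have hh_eq : h = invFourier (fun ω ↦ cexp (-((ω ⬝ᵥ (M *ᵥ ω) : ℝ) : ℂ))) := by
    simp only [hh, hM, dotProduct_add_transpose_mul_self_mulVec]
  have hΔ_eq (u : Fin 2 → ℝ) :
      Δ u = cexp (-(c₀ : ℂ)) * (cexp (I * ((u ⬝ᵥ btil : ℝ) : ℂ)) * h u) := by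
    rw [hΔ, hh_eq, ← invFourier_comp_sub, ← invFourier_const_mul]
    congr 1
    ext ω
    rw [hsq ω, ← exp_add]
    push_cast
    ring_nf
  have hdet := hMpos.det_pos
  refine ⟨hc₀_nonneg, fun u ↦ ?_, fun u ↦ ?_⟩
  · rw [hh_eq, invFourier_cexp_neg_dotProduct_mulVec hMpos, ofReal_re, ofReal_im]
    exact ⟨by positivity, rfl⟩
  · rw [hΔ_eq, hh_eq, invFourier_cexp_neg_dotProduct_mulVec hMpos, norm_mul,
      norm_mul, ← ofReal_neg, norm_exp_ofReal, mul_comm I, norm_exp_ofReal_mul_I, one_mul,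
      norm_real, ofReal_re, Real.norm_of_nonneg (by positivity)]
end
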